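/- Let M = M[A] over GF(p), T ⊆ E, and let A'_T be obtained from A_T by adjoining an extra column z whose only nonzero entry is a 1 in the new (last) row; let M'_T = M[A'_T]. Then for every circuit C of M'_T containing z, the set C \ {z} is an NPT-circuit of M, i.e. a circuit of M that meets T and is independent in M_T. -/

import Mathlib

open Set

/-- A subset `S` of the column index set `E` is independent in the vector matroid of the
matrix with columns `A` over `GF(p)` iff the corresponding columns are linearly independent. -/
def MatIndep (p : ℕ) {E : Type} {n : ℕ} (A : E → (Fin n → ZMod p)) (S : Set E) : Prop :=
  LinearIndependent (ZMod p) (fun x : S => A x.1)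

/-- A circuit is a minimal dependent set. -/
def MatCircuit (p : ℕ) {E : Type} {n : ℕ} (A : E → (Fin n → ZMod p)) (C : Set E) : Prop :=
  ¬ MatIndep p A C ∧ ∀ D : Set E, D ⊂ C → MatIndep p A D

/-- The rank of a set of columns: the dimension of their span (equivalently, the maximum
size of an independent subset). -/
noncomputable def matRank (p : ℕ) {E : Type} {n : ℕ} (A : E → (Fin n → ZMod p)) (S : Set E) : ℕ :=
  Module.finrank (ZMod p) (Submodule.span (ZMod p) (A '' S))

/-- The matrix `A_T`: adjoin to `A` an extra row equal to the indicator vector of `T`. -/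
noncomputable def splitMat (p : ℕ) {E : Type} {n : ℕ} (A : E → (Fin n → ZMod p)) (T : Set E) :
    E → (Fin (n + 1) → ZMod p) :=
  fun e => Fin.snoc (A e) (T.indicator (fun _ => (1 : ZMod p)) e)

/-- The matrix `A'_T`: adjoin to `A_T` an extra column `z` (modeled as `none`) whose only
nonzero entry is a `1` in the new last row. -/
noncomputable def elSplitMat (p : ℕ) {E : Type} {n : ℕ} (A : E → (Fin n → ZMod p)) (T : Set E) :
    Option E → (Fin (n + 1) → ZMod p) :=
  fun o => o.elim (Fin.snoc (0 : Fin n → ZMod p) 1) (splitMat p A T)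

/-- An `NPT`-circuit of `M = M[A]`: a circuit of `M` meeting `T` that is independent in
`M_T = M[A_T]` (i.e. not a circuit of `M_T`). -/
def NPTCircuit (p : ℕ) {E : Type} {n : ℕ} (A : E → (Fin n → ZMod p)) (T : Set E)
    (C : Set E) : Prop :=
  MatCircuit p A C ∧ (C ∩ T).Nonempty ∧ MatIndep p (splitMat p A T) C

/-- A basis: a maximal independent set. -/
def MatBasis (p : ℕ) {E : Type} {n : ℕ} (A : E → (Fin n → ZMod p)) (B : Set E) : Prop :=
  MatIndep p A B ∧ ∀ S : Set E, MatIndep p A S → B ⊆ S → S = B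

/-- A cocircuit: a minimal set meeting every basis. -/
def MatCocircuit (p : ℕ) {E : Type} {n : ℕ} (A : E → (Fin n → ZMod p)) (T : Set E) : Prop :=
  (∀ B : Set E, MatBasis p A B → (T ∩ B).Nonempty) ∧
    ∀ T' : Set E, T' ⊂ T → ¬ ∀ B : Set E, MatBasis p A B → (T' ∩ B).Nonempty

/-- Connectedness of the vector matroid of `A`: there is no partition `(X, Xᶜ)` of the
ground set into nonempty sets with `r X + r Xᶜ ≤ r E`. -/
def MatConnected (p : ℕ) {E : Type} {n : ℕ} (A : E → (Fin n → ZMod p)) : Prop :=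
  ∀ X : Set E, X.Nonempty → Xᶜ.Nonempty →
    matRank p A Set.univ < matRank p A X + matRank p A Xᶜ

section Aux
variable {p n : ℕ} {E ι : Type}

lemma matIndep_iff' (A : E → Fin n → ZMod p) (S : Set E) :
    MatIndep p A S ↔ ∀ l ∈ Finsupp.supported (ZMod p) (ZMod p) S,
      Finsupp.linearCombination (ZMod p) A l = 0 → l = 0 :=
  linearIndepOn_iff

lemma not_matIndep_iff' (A : E → Fin n → ZMod p) (S : Set E) :
    ¬ MatIndep p A S ↔ ∃ l : E →₀ ZMod p, l ∈ Finsupp.supported (ZMod p) (ZMod p) S ∧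
      Finsupp.linearCombination (ZMod p) A l = 0 ∧ l ≠ 0 :=
  linearDepOn_iff'

lemma lc_apply {m : ℕ} (v : ι → Fin m → ZMod p) (l : ι →₀ ZMod p) (i : Fin m) :
    (Finsupp.linearCombination (ZMod p) v l) i
      = Finsupp.linearCombination (ZMod p) (fun e => v e i) l :=
  Finsupp.apply_linearCombination (ZMod p) (LinearMap.proj i) v l

end Aux

theorem circuit_elSplit_mem_z {p n : ℕ} [Fact p.Prime] {E : Type}
    (A : E → (Fin n → ZMod p)) (T : Set E) (C : Set (Option E))
    (hC : MatCircuit p (elSplitMat p A T) C) (hz : none ∈ C) :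
    ∃ C₀ : Set E, C = insert none (Option.some '' C₀) ∧ NPTCircuit p A T C₀ := by
  classical
  obtain ⟨hdep, hmin⟩ := hC
  set A' := elSplitMat p A T with hA'
  set ind : E → ZMod p := T.indicator (fun _ => (1 : ZMod p)) with hind
  set C₀ : Set E := {e | some e ∈ C} with hC₀
  have hCeq : C = insert none (Option.some '' C₀) := by
    ext o
    cases o with
    | none => simp [hz]
    | some e => simp [hC₀]
  -- extract a nontrivial dependence on C
  obtain ⟨l, hlsupp, hl0, hlne⟩ := (not_matIndep_iff' A' C).mp hdep
  have hlsupp' := (Finsupp.mem_supported _ _).mp hlsupp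
  have hlnone : l none ≠ 0 := by
    intro h
    apply hlne
    refine (matIndep_iff' A' (C \ {none})).mp
      (hmin _ (Set.sdiff_singleton_ssubset.mpr hz)) l ?_ hl0
    rw [Finsupp.mem_supported]
    intro o ho
    refine ⟨hlsupp' ho, ?_⟩
    rintro rfl
    exact (Finsupp.mem_support_iff.mp ho) h
  have key : ∀ i : Fin (n + 1),
      Finsupp.linearCombination (ZMod p) (fun o => A' o i) l = 0 := by
    intro i
    rw [← lc_apply, hl0]
    rfl
  have hsomesupp : l.some ∈ Finsupp.supported (ZMod p) (ZMod p) C₀ := by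
    rw [Finsupp.mem_supported]
    intro e he
    have : l (some e) ≠ 0 := by simpa using Finsupp.mem_support_iff.mp he
    exact hlsupp' (Finsupp.mem_support_iff.mpr this)
  -- first n coordinates: the restriction to E is a dependence for A
  have hA0 : Finsupp.linearCombination (ZMod p) A l.some = 0 := by
    funext j
    have h := key (Fin.castSucc j)
    rw [Finsupp.linearCombination_option] at h
    have h1 : ((fun o => A' o (Fin.castSucc j)) ∘ some) = fun e => A e j := by
      funext e; simp [hA', elSplitMat, splitMat]
    have h2 : A' none (Fin.castSucc j) = 0 := by simp [hA', elSplitMat]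
    rw [h1, h2] at h
    rw [lc_apply]
    simpa using h
  -- last coordinate
  have hlast : l none + Finsupp.linearCombination (ZMod p) ind l.some = 0 := by
    have h := key (Fin.last n)
    rw [Finsupp.linearCombination_option] at h
    have h1 : ((fun o => A' o (Fin.last n)) ∘ some) = ind := by
      funext e; simp [hA', elSplitMat, splitMat, hind]
    have h2 : A' none (Fin.last n) = 1 := by simp [hA', elSplitMat]
    rw [h1, h2] at h
    simpa using h
  have hindne : Finsupp.linearCombination (ZMod p) ind l.some ≠ 0 := by
    intro h
    rw [h] at hlast
    exact hlnone (by simpa using hlast)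
  have hsomene : l.some ≠ 0 := by
    intro h
    exact hindne (by rw [h, map_zero])
  refine ⟨C₀, hCeq, ⟨?_, ?_⟩, ?_, ?_⟩
  · -- C₀ is dependent for A
    exact (not_matIndep_iff' A C₀).mpr ⟨l.some, hsomesupp, hA0, hsomene⟩
  · -- every proper subset of C₀ is independent for A
    intro D hD
    by_contra hnd
    obtain ⟨l₀, hsupp₀, hl₀, hne₀⟩ := (not_matIndep_iff' A D).mp hnd
    obtain ⟨x, hxC₀, hxD⟩ := Set.exists_of_ssubset hD
    set s : ZMod p := Finsupp.linearCombination (ZMod p) ind l₀ with hs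
    set L : Option E →₀ ZMod p :=
      Finsupp.mapDomain some l₀ + Finsupp.single none (-s) with hL
    have hLC : Finsupp.linearCombination (ZMod p) A' L = 0 := by
      funext i
      rw [hL, map_add, Finsupp.linearCombination_mapDomain,
        Finsupp.linearCombination_single]
      have hcomp : A' ∘ some = splitMat p A T := rfl
      rw [hcomp]
      induction i using Fin.lastCases with
      | last =>
        simp only [Pi.add_apply, Pi.smul_apply, Pi.zero_apply, lc_apply]
        simp [hA', elSplitMat, splitMat, Fin.snoc_last, ← hind, ← hs]
      | cast j =>
        simp only [Pi.add_apply, Pi.smul_apply, Pi.zero_apply, lc_apply]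
        have : (fun e => splitMat p A T e (Fin.castSucc j)) = fun e => A e j := by
          funext e; simp [splitMat]
        rw [this, ← lc_apply, hl₀]
        simp [hA', elSplitMat]
    have hLne : L ≠ 0 := by
      obtain ⟨e, he⟩ := Finsupp.ne_iff.mp hne₀
      intro h
      apply he
      have hLe : L (some e) = l₀ e := by
        simp [hL, Finsupp.mapDomain_apply (Option.some_injective E)]
      rw [h] at hLe
      simpa using hLe.symm
    have hLsupp : L ∈ Finsupp.supported (ZMod p) (ZMod p) (C \ {some x}) := by
      rw [Finsupp.mem_supported]
      intro o ho
      have ho' := Finsupp.support_add (by exact ho)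
      rw [Finset.mem_union] at ho'
      rcases ho' with h | h
      · obtain ⟨e, he, rfl⟩ := Finset.mem_image.mp (Finsupp.mapDomain_support h)
        have heD : e ∈ D := hsupp₀ he
        refine ⟨hD.1 heD, ?_⟩
        simp only [Set.mem_singleton_iff]
        intro hcontra
        exact hxD (by rwa [Option.some_injective E hcontra] at heD)
      · have hnone : o = none := by
          simpa using Finsupp.support_single_subset h
        subst hnone
        exact ⟨hz, by simp⟩
    exact hLne ((matIndep_iff' A' _).mp
      (hmin _ (Set.sdiff_singleton_ssubset.mpr hxC₀)) L hLsupp hLC)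
  · -- C₀ meets T
    by_contra hemp
    apply hindne
    rw [Finsupp.linearCombination_apply, Finsupp.sum]
    apply Finset.sum_eq_zero
    intro e he
    have heC₀ : e ∈ C₀ := (Finsupp.mem_supported _ _).mp hsomesupp he
    have heT : e ∉ T := fun hT => hemp ⟨e, heC₀, hT⟩
    rw [hind]
    simp [Set.indicator_of_notMem heT]
  · -- C₀ independent for splitMat
    rw [matIndep_iff']
    intro l₀ hsupp₀ hl₀
    have hss : Option.some '' C₀ ⊂ C := by
      constructor
      · rintro _ ⟨e, he, rfl⟩; exact he
      · intro hsub
        obtain ⟨e, -, he⟩ := hsub hz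
        exact Option.some_ne_none e he
    have h := (matIndep_iff' A' _).mp (hmin _ hss) (Finsupp.mapDomain some l₀) ?_ ?_
    · exact Finsupp.mapDomain_injective (Option.some_injective E) (by simpa using h)
    · rw [Finsupp.mem_supported]
      intro o ho
      obtain ⟨e, he, rfl⟩ := Finset.mem_image.mp
        (Finsupp.mapDomain_support ho)
      exact ⟨e, hsupp₀ he, rfl⟩
    · rw [Finsupp.linearCombination_mapDomain]
      exact hl₀
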